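/- arXiv:2407.01967 — 2 statements merged into one kernel-verified Lean document; each statement's English description precedes it below -/
import Mathlib

section
/- Let n ≥ 2 and let p = (p_1,…,p_n) and s = (s_1,…,s_n) be probability vectors with strictly positive entries (p_i > 0, s_i > 0, Σ_i p_i = Σ_i s_i = 1). For 1 ≤ i ≤ n define q_i(p) = p_i / Σ_{k=i}^{n} p_k and q_{¬i}(p) = (Σ_{k=i+1}^{n} p_k) / (Σ_{k=i}^{n} p_k). Then the Kullback–Leibler divergence decomposes as KL(p‖s) = Σ_{i=1}^{n−1} w_i · KL₂((q_i(p), q_{¬i}(p)) ‖ (q_i(s), q_{¬i}(s))), where w_i = Σ_{k=i}^{n} p_k and KL₂((a,b)‖(a',b')) = a·log(a/a') + b·log(b/b') is the binary Kullback–Leibler divergence. -/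
lemma aux_term (a b c C A B : ℝ) (ha : 0 < a) (hb : 0 < b) (hc : 0 < c)
    (hC : 0 < C) (hA : A = a + c) (hB : B = b + C) :
    A * ((a / A) * Real.log ((a / A) / (b / B)) +
        (c / A) * Real.log ((c / A) / (C / B))) =
      a * Real.log (a / b) + (c * Real.log (c / C) - A * Real.log (A / B)) := by
  subst hA hB
  have hA : 0 < a + c := by linarith
  have hB : 0 < b + C := by linarith
  rw [Real.log_div (div_pos ha hA).ne' (div_pos hb hB).ne',
    Real.log_div (div_pos hc hA).ne' (div_pos hC hB).ne',
    Real.log_div ha.ne' hA.ne', Real.log_div hb.ne' hB.ne',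
    Real.log_div hc.ne' hA.ne', Real.log_div hC.ne' hB.ne',
    Real.log_div ha.ne' hb.ne', Real.log_div hc.ne' hC.ne',
    Real.log_div hA.ne' hB.ne']
  field_simp
  ring

lemma sum_Icc_split (n i : ℕ) (f : ℕ → ℝ) (h : i ≤ n) :
    ∑ k ∈ Finset.Icc i n, f k = f i + ∑ k ∈ Finset.Icc (i+1) n, f k := by
  rw [Finset.Icc_eq_cons_Ioc h, Finset.sum_cons, Finset.Icc_add_one_left_eq_Ioc]

lemma sum_Icc_pos (n i : ℕ) (f : ℕ → ℝ) (h1 : 1 ≤ i) (h2 : i ≤ n)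
    (hf : ∀ k ∈ Finset.Icc 1 n, 0 < f k) : 0 < ∑ k ∈ Finset.Icc i n, f k := by
  apply Finset.sum_pos
  · intro k hk
    rw [Finset.mem_Icc] at hk
    exact hf k (Finset.mem_Icc.mpr ⟨by omega, hk.2⟩)
  · exact ⟨i, Finset.mem_Icc.mpr ⟨le_refl i, h2⟩⟩

/-- **KL-Divergence decomposition (Theorem 1).**
For probability vectors `p, s` with strictly positive entries (indexed by `1,…,n`),
`KL(p‖s) = ∑_{i=1}^{n-1} w_i · KL₂((q_i(p), q_{¬i}(p)) ‖ (q_i(s), q_{¬i}(s)))`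
with `w_i = ∑_{k=i}^n p_k`, `q_i(p) = p_i / ∑_{k=i}^n p_k`, and
`q_{¬i}(p) = (∑_{k=i+1}^n p_k) / (∑_{k=i}^n p_k)`. -/
theorem kl_divergence_decomposition (n : ℕ) (hn : 2 ≤ n) (p s : ℕ → ℝ)
    (hp : ∀ i ∈ Finset.Icc 1 n, 0 < p i)
    (hs : ∀ i ∈ Finset.Icc 1 n, 0 < s i)
    (hp1 : ∑ i ∈ Finset.Icc 1 n, p i = 1)
    (hs1 : ∑ i ∈ Finset.Icc 1 n, s i = 1) :
    ∑ i ∈ Finset.Icc 1 n, p i * Real.log (p i / s i) =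
      ∑ i ∈ Finset.Icc 1 (n - 1),
        (∑ k ∈ Finset.Icc i n, p k) *
          ((p i / ∑ k ∈ Finset.Icc i n, p k) *
              Real.log ((p i / ∑ k ∈ Finset.Icc i n, p k) /
                (s i / ∑ k ∈ Finset.Icc i n, s k)) +
            ((∑ k ∈ Finset.Icc (i + 1) n, p k) / ∑ k ∈ Finset.Icc i n, p k) *
              Real.log (((∑ k ∈ Finset.Icc (i + 1) n, p k) / ∑ k ∈ Finset.Icc i n, p k) /
                ((∑ k ∈ Finset.Icc (i + 1) n, s k) / ∑ k ∈ Finset.Icc i n, s k))) := by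
  set f : ℕ → ℝ := fun i =>
    (∑ k ∈ Finset.Icc i n, p k) *
      Real.log ((∑ k ∈ Finset.Icc i n, p k) / (∑ k ∈ Finset.Icc i n, s k)) with hf
  have key : ∀ i ∈ Finset.Icc 1 (n - 1),
      (∑ k ∈ Finset.Icc i n, p k) *
        ((p i / ∑ k ∈ Finset.Icc i n, p k) *
            Real.log ((p i / ∑ k ∈ Finset.Icc i n, p k) /
              (s i / ∑ k ∈ Finset.Icc i n, s k)) +
          ((∑ k ∈ Finset.Icc (i + 1) n, p k) / ∑ k ∈ Finset.Icc i n, p k) *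
            Real.log (((∑ k ∈ Finset.Icc (i + 1) n, p k) / ∑ k ∈ Finset.Icc i n, p k) /
              ((∑ k ∈ Finset.Icc (i + 1) n, s k) / ∑ k ∈ Finset.Icc i n, s k))) =
      p i * Real.log (p i / s i) + (f (i+1) - f i) := by
    intro i hi
    obtain ⟨h1, h2⟩ := Finset.mem_Icc.mp hi
    have hin : i + 1 ≤ n := by omega
    have hi' : i ∈ Finset.Icc 1 n := Finset.mem_Icc.mpr ⟨h1, by omega⟩
    exact aux_term (p i) (s i) (∑ k ∈ Finset.Icc (i+1) n, p k)
      (∑ k ∈ Finset.Icc (i+1) n, s k) _ _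
      (hp i hi') (hs i hi')
      (sum_Icc_pos n (i+1) p (by omega) hin hp)
      (sum_Icc_pos n (i+1) s (by omega) hin hs)
      (sum_Icc_split n i p (by omega))
      (sum_Icc_split n i s (by omega))
  rw [Finset.sum_congr rfl key, Finset.sum_add_distrib]
  have htel : ∑ i ∈ Finset.Icc 1 (n-1), (f (i+1) - f i) = f n - f 1 := by
    have h1 : Finset.Icc 1 (n-1) = Finset.Ico 1 n := by
      ext k
      simp only [Finset.mem_Icc, Finset.mem_Ico]
      omega
    rw [h1, Finset.sum_Ico_eq_sub _ (by omega), Finset.sum_range_sub f,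
      Finset.sum_range_sub f]
    ring
  have hf1 : f 1 = 0 := by
    rw [hf]
    simp only [hp1, hs1]
    simp
  have hfn : f n = p n * Real.log (p n / s n) := by
    rw [hf]
    simp
  rw [htel, hf1, hfn]
  have hsplit : ∑ i ∈ Finset.Icc 1 n, p i * Real.log (p i / s i) =
      (∑ i ∈ Finset.Icc 1 (n-1), p i * Real.log (p i / s i)) + p n * Real.log (p n / s n) := by
    have : n - 1 + 1 = n := by omega
    rw [← this, Finset.sum_Icc_succ_top (by omega), this]
  rw [hsplit]
  ring
end

section
/- Let n ≥ 2 and let p = (p_1,…,p_n) and s = (s_1,…,s_n) be probability vectors with strictly positive entries. Define q_{¬k}(p) = (Σ_{j=k+1}^{n} p_j) / (Σ_{j=k}^{n} p_j) and similarly for s. Then Σ_{i=1}^{n} p_i · log( (Σ_{k=i}^{n} p_k) / (Σ_{k=i}^{n} s_k) ) = Σ_{k=1}^{n−1} (Σ_{j=k}^{n} p_j) · q_{¬k}(p) · log( q_{¬k}(p) / q_{¬k}(s) ). -/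
/-- **Summation-interchange identity** in the proof of the KL-divergence decomposition:
`∑_{i=1}^n p_i log((∑_{k=i}^n p_k)/(∑_{k=i}^n s_k))
  = ∑_{k=1}^{n-1} (∑_{j=k}^n p_j) · q_{¬k}(p) · log(q_{¬k}(p)/q_{¬k}(s))`. -/
theorem tail_log_sum_interchange (n : ℕ) (hn : 2 ≤ n) (p s : ℕ → ℝ)
    (hp : ∀ i ∈ Finset.Icc 1 n, 0 < p i)
    (hs : ∀ i ∈ Finset.Icc 1 n, 0 < s i)
    (hp1 : ∑ i ∈ Finset.Icc 1 n, p i = 1)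
    (hs1 : ∑ i ∈ Finset.Icc 1 n, s i = 1) :
    ∑ i ∈ Finset.Icc 1 n,
        p i * Real.log ((∑ k ∈ Finset.Icc i n, p k) / ∑ k ∈ Finset.Icc i n, s k) =
      ∑ k ∈ Finset.Icc 1 (n - 1),
        (∑ j ∈ Finset.Icc k n, p j) *
          ((∑ j ∈ Finset.Icc (k + 1) n, p j) / ∑ j ∈ Finset.Icc k n, p j) *
          Real.log (((∑ j ∈ Finset.Icc (k + 1) n, p j) / ∑ j ∈ Finset.Icc k n, p j) /
            ((∑ j ∈ Finset.Icc (k + 1) n, s j) / ∑ j ∈ Finset.Icc k n, s j)) := by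
  set P : ℕ → ℝ := fun i => ∑ j ∈ Finset.Icc i n, p j with hP
  set S : ℕ → ℝ := fun i => ∑ j ∈ Finset.Icc i n, s j with hS
  set L : ℕ → ℝ := fun i => Real.log (P i / S i) with hL
  have hPpos : ∀ i, 1 ≤ i → i ≤ n → 0 < P i := by
    intro i h1 h2
    apply Finset.sum_pos
    · intro j hj
      exact hp j (Finset.mem_Icc.mpr ⟨le_trans h1 (Finset.mem_Icc.mp hj).1,
        (Finset.mem_Icc.mp hj).2⟩)
    · exact ⟨i, Finset.mem_Icc.mpr ⟨le_rfl, h2⟩⟩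
  have hSpos : ∀ i, 1 ≤ i → i ≤ n → 0 < S i := by
    intro i h1 h2
    apply Finset.sum_pos
    · intro j hj
      exact hs j (Finset.mem_Icc.mpr ⟨le_trans h1 (Finset.mem_Icc.mp hj).1,
        (Finset.mem_Icc.mp hj).2⟩)
    · exact ⟨i, Finset.mem_Icc.mpr ⟨le_rfl, h2⟩⟩
  have hsplit : ∀ i, 1 ≤ i → i ≤ n → P i = p i + P (i + 1) := by
    intro i _ h2
    simp only [hP]
    rw [Finset.Icc_add_one_left_eq_Ioc, ← Finset.Ioc_insert_left h2, Finset.sum_insert (by simp)]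
  have hPn1 : P (n + 1) = 0 := by
    simp only [hP]
    rw [Finset.Icc_eq_empty (by omega), Finset.sum_empty]
  have hL1 : L 1 = 0 := by
    simp only [hL, hP, hS, hp1, hs1]
    norm_num
  -- LHS = ∑ (P i - P (i+1)) * L i
  have lhs_eq : ∑ i ∈ Finset.Icc 1 n,
      p i * Real.log ((∑ k ∈ Finset.Icc i n, p k) / ∑ k ∈ Finset.Icc i n, s k)
      = (∑ i ∈ Finset.Icc 1 n, P i * L i) - ∑ i ∈ Finset.Icc 1 n, P (i + 1) * L i := by
    rw [← Finset.sum_sub_distrib]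
    apply Finset.sum_congr rfl
    intro i hi
    obtain ⟨h1, h2⟩ := Finset.mem_Icc.mp hi
    have := hsplit i h1 h2
    have hpi : p i = P i - P (i + 1) := by linarith
    rw [hpi]; ring
  -- RHS terms
  have rhs_eq : ∀ k, 1 ≤ k → k ≤ n - 1 →
      (∑ j ∈ Finset.Icc k n, p j) *
        ((∑ j ∈ Finset.Icc (k + 1) n, p j) / ∑ j ∈ Finset.Icc k n, p j) *
        Real.log (((∑ j ∈ Finset.Icc (k + 1) n, p j) / ∑ j ∈ Finset.Icc k n, p j) /
          ((∑ j ∈ Finset.Icc (k + 1) n, s j) / ∑ j ∈ Finset.Icc k n, s j))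
      = P (k + 1) * L (k + 1) - P (k + 1) * L k := by
    intro k h1 h2
    have hkn : k ≤ n := by omega
    have hk1n : k + 1 ≤ n := by omega
    have pk := hPpos k h1 hkn
    have pk1 := hPpos (k + 1) (by omega) hk1n
    have sk := hSpos k h1 hkn
    have sk1 := hSpos (k + 1) (by omega) hk1n
    show P k * (P (k + 1) / P k) * Real.log ((P (k + 1) / P k) / (S (k + 1) / S k)) = _
    have hfac : P k * (P (k + 1) / P k) = P (k + 1) := by
      field_simp
    rw [hfac]
    have hlog : Real.log ((P (k + 1) / P k) / (S (k + 1) / S k)) = L (k + 1) - L k := by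
      simp only [hL]
      rw [div_div_div_comm, Real.log_div (by positivity) (by positivity)]
    rw [hlog]; ring
  rw [lhs_eq, Finset.sum_congr rfl (fun k hk => rhs_eq k (Finset.mem_Icc.mp hk).1
    (Finset.mem_Icc.mp hk).2), Finset.sum_sub_distrib]
  -- first sums: shift index
  have e1 : ∑ i ∈ Finset.Icc 1 n, P i * L i
      = ∑ k ∈ Finset.Icc 1 (n - 1), P (k + 1) * L (k + 1) := by
    rw [← Finset.Ioc_insert_left (by omega : 1 ≤ n),
      Finset.sum_insert (by simp), hL1, mul_zero, zero_add,
      ← Finset.Icc_add_one_left_eq_Ioc]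
    exact Finset.sum_nbij' (fun i => i - 1) (fun k => k + 1)
      (by intro a ha; simp only [Finset.mem_Icc] at *; omega)
      (by intro a ha; simp only [Finset.mem_Icc] at *; omega)
      (by intro a ha; simp only [Finset.mem_Icc] at ha; omega)
      (by intro a ha; simp only [Finset.mem_Icc] at ha; omega)
      (by intro a ha; simp only [Finset.mem_Icc] at ha
          have : a - 1 + 1 = a := by omega
          rw [this])
  have e2 : ∑ i ∈ Finset.Icc 1 n, P (i + 1) * L i
      = ∑ k ∈ Finset.Icc 1 (n - 1), P (k + 1) * L k := by
    rw [show n = (n - 1) + 1 by omega, Finset.sum_Icc_succ_top (by omega),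
      show (n-1+1) = n by omega, hPn1, zero_mul, add_zero]
  rw [e1, e2]
end
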